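/- Let g be a complex semisimple Lie algebra, R₁ ⊆ Δ₊ an upward-closed set of positive roots, m = ⊕_{β∈R₁} g_β, and α a positive root such that C_α ∩ S^β ≠ ∅ for some β ∈ R₁ (i.e. some simple root in the support of α is extremal for some β ∈ R₁). Then g_α ⊆ [m, g] + [[m, g], b], where b is a Borel subalgebra containing m. -/

import Mathlib

open scoped InnerProductSpace

variable {V : Type*} [NormedAddCommGroup V] [InnerProductSpace ℝ V]

/-- A (reduced, crystallographic) root system in a real inner product space. -/
structure IsRootSystem (Δ : Set V) : Prop where
  finite : Δ.Finite
  nonzero : (0 : V) ∉ Δ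
  span_top : Submodule.span ℝ Δ = ⊤
  reflect_mem : ∀ α ∈ Δ, ∀ β ∈ Δ, β - (2 * ⟪β, α⟫_ℝ / ⟪α, α⟫_ℝ) • α ∈ Δ
  crystallographic : ∀ α ∈ Δ, ∀ β ∈ Δ, ∃ n : ℤ, 2 * ⟪β, α⟫_ℝ / ⟪α, α⟫_ℝ = (n : ℝ)
  reduced : ∀ α ∈ Δ, ∀ t : ℝ, t • α ∈ Δ → t = 1 ∨ t = -1

/-- `Pi` is a base of simple roots for the root system `Δ`. -/
structure IsBase (Δ : Set V) (Pi : Finset V) : Prop where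
  subset : ↑Pi ⊆ Δ
  indep : LinearIndependent ℝ (fun γ : {x // x ∈ Pi} => (γ : V))
  decomp : ∀ α ∈ Δ, (∃ c : V → ℕ, α = ∑ γ ∈ Pi, (c γ : ℝ) • γ) ∨
      (∃ c : V → ℕ, α = -∑ γ ∈ Pi, (c γ : ℝ) • γ)

/-- `α` is a positive root with respect to the base `Pi`. -/
def IsPos (Δ : Set V) (Pi : Finset V) (α : V) : Prop :=
  α ∈ Δ ∧ ∃ c : V → ℕ, α = ∑ γ ∈ Pi, (c γ : ℝ) • γ

/-- The dominance order associated with the base `Pi`. -/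
def DomLe (Pi : Finset V) (ω₁ ω₂ : V) : Prop :=
  ∃ c : V → ℕ, ω₂ = ω₁ + ∑ γ ∈ Pi, (c γ : ℝ) • γ

/-- `θ` is the highest root of `Δ` with respect to the base `Pi`. -/
def IsHighest (Δ : Set V) (Pi : Finset V) (θ : V) : Prop :=
  θ ∈ Δ ∧ ∀ α ∈ Δ, DomLe Pi α θ

/-- The root system `Δ` is irreducible. -/
def IsIrred (Δ : Set V) : Prop :=
  ∀ Δ₁ Δ₂ : Set V, Δ = Δ₁ ∪ Δ₂ → (∀ a ∈ Δ₁, ∀ b ∈ Δ₂, ⟪a, b⟫_ℝ = 0) →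
    Δ₁ = ∅ ∨ Δ₂ = ∅
variable {V : Type*} [NormedAddCommGroup V] [InnerProductSpace ℝ V]

/-- A root space decomposition of the Lie algebra `L` over the root system `Δ`. -/
structure RootDecomp (k : Type*) (L : Type*) [Field k] [LieRing L] [LieAlgebra k L]
    (Δ : Set V) where
  /-- the Cartan subalgebra -/
  H : Submodule k L
  /-- the root spaces (with `gs 0 = H`) -/
  gs : V → Submodule k L
  gs_zero : gs 0 = H
  gs_ne_bot : ∀ α ∈ Δ, gs α ≠ ⊥
  gs_eq_bot : ∀ α : V, α ∉ Δ → α ≠ 0 → gs α = ⊥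
  sup_eq_top : (⨆ α : V, gs α) = ⊤
  indep : iSupIndep gs
  lie_mem : ∀ α β : V, ∀ x ∈ gs α, ∀ y ∈ gs β, ⁅x, y⁆ ∈ gs (α + β)
  lie_span : ∀ α ∈ Δ, ∀ β ∈ Δ, α + β ∈ Δ → ∀ z ∈ gs (α + β),
      ∃ x ∈ gs α, ∃ y ∈ gs β, z = ⁅x, y⁆
  exists_lie_H : ∀ α ∈ Δ, ∀ z ∈ gs α, ∃ h ∈ H, ∃ x ∈ gs α, z = ⁅h, x⁆
  coroot_span : H ≤ Submodule.span k
      {z | ∃ α ∈ Δ, ∃ x ∈ gs α, ∃ y ∈ gs (-α), z = ⁅x, y⁆}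

/-!
Since `m` is stable under the positive root vectors, so is `[m, g]`; in particular
`[[m, g], b] ⊆ [m, g]`, and it suffices to show `g_α ⊆ [m, g]`. For the extremal simple root
`γ` this holds because `g_γ = [g_β, g_{γ-β}]` (or `g_γ = [h, g_γ]` when `β = γ`). One then climbs
from `γ` to `α` by induction on the height: some simple `δ` in the support of `α` has
`⟪α, δ⟫ > 0`, so `α - δ` is a root and `g_α = [g_δ, g_{α-δ}]`; if subtracting `δ` would remove
`γ` from the support, then `δ = γ` and `g_α = [g_{α-γ}, g_γ]` instead.
-/
theorem IsRootSystem.ne_zero {Δ : Set V} (hΔ : IsRootSystem Δ) {α : V} (hα : α ∈ Δ) : α ≠ 0 :=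
  ne_of_mem_of_not_mem hα hΔ.nonzero

theorem IsRootSystem.neg_mem {Δ : Set V} (hΔ : IsRootSystem Δ) {α : V} (hα : α ∈ Δ) :
    -α ∈ Δ := by
  have h := hΔ.reflect_mem α hα α hα
  rwa [mul_div_assoc, div_self (real_inner_self_pos.mpr (hΔ.ne_zero hα)).ne',
    mul_one, two_smul, sub_add_cancel_left] at h

theorem IsRootSystem.sub_mem_of_inner_pos {Δ : Set V} (hΔ : IsRootSystem Δ) {α β : V}
    (hα : α ∈ Δ) (hβ : β ∈ Δ) (hne : α ≠ β) (hpos : 0 < ⟪α, β⟫_ℝ) : α - β ∈ Δ := by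
  obtain ⟨n, hn⟩ := hΔ.crystallographic β hβ α hα
  obtain ⟨p, hp⟩ := hΔ.crystallographic α hα β hβ
  by_cases hn1 : n = 1
  · have h := hΔ.reflect_mem β hβ α hα
    rwa [hn, hn1, Int.cast_one, one_smul] at h
  by_cases hp1 : p = 1
  · have h := hΔ.neg_mem (hΔ.reflect_mem α hα β hβ)
    rwa [hp, hp1, Int.cast_one, one_smul, neg_sub] at h
  rw [real_inner_comm] at hp
  -- Otherwise both Cartan integers are at least `2`, which forces `‖α - β‖² ≤ 0`.
  have le_of_ne_one {r : ℝ} {t : ℤ} (hr : 0 < r) (ht : 2 * ⟪α, β⟫_ℝ / r = t) (ht1 : t ≠ 1) :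
      r ≤ ⟪α, β⟫_ℝ := by
    have : (0 : ℤ) < t := by exact_mod_cast ht ▸ (by positivity : 0 < 2 * ⟪α, β⟫_ℝ / r)
    have : (2 : ℝ) ≤ t := by exact_mod_cast (by omega : (2 : ℤ) ≤ t)
    rw [← ht, le_div_iff₀ hr] at this
    linarith
  have h₁ := le_of_ne_one (real_inner_self_pos.mpr (hΔ.ne_zero hβ)) hn hn1
  have h₂ := le_of_ne_one (real_inner_self_pos.mpr (hΔ.ne_zero hα)) hp hp1
  have := real_inner_self_pos.mpr (sub_ne_zero.mpr hne)
  rw [real_inner_sub_sub_self] at this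
  linarith

theorem IsBase.coeff_eq_zero_of_sum_eq_zero {Δ : Set V} {Pi : Finset V} (hB : IsBase Δ Pi)
    {f : V → ℝ} (hf : ∑ γ ∈ Pi, f γ • γ = 0) {γ : V} (hγ : γ ∈ Pi) : f γ = 0 :=
  Fintype.linearIndependent_iff.mp hB.indep (fun γ => f γ)
    ((Finset.sum_coe_sort Pi fun γ => f γ • γ).trans hf) ⟨γ, hγ⟩

theorem IsBase.eq_zero_of_add_eq_zero {Δ : Set V} {Pi : Finset V} (hB : IsBase Δ Pi)
    {a b : V} {ca cb : V → ℕ} (ha : a = ∑ γ ∈ Pi, (ca γ : ℝ) • γ)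
    (hb : b = ∑ γ ∈ Pi, (cb γ : ℝ) • γ) (hab : a + b = 0) : a = 0 := by
  have hsum : ∑ γ ∈ Pi, ((ca γ : ℝ) + cb γ) • γ = 0 := by
    simpa only [add_smul, Finset.sum_add_distrib, ← ha, ← hb]
  rw [ha]
  refine Finset.sum_eq_zero fun γ hγ => ?_
  have hγ0 := hB.coeff_eq_zero_of_sum_eq_zero hsum hγ
  rw [(add_eq_zero_iff_of_nonneg (Nat.cast_nonneg _) (Nat.cast_nonneg _)).mp hγ0 |>.1, zero_smul]

theorem IsBase.isPos_of_mem {Δ : Set V} {Pi : Finset V} (hB : IsBase Δ Pi) {δ : V}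
    (hδ : δ ∈ Pi) : IsPos Δ Pi δ := by
  classical
  refine ⟨hB.subset hδ, _root_.Pi.single δ 1, ?_⟩
  rw [Finset.sum_eq_single_of_mem δ hδ fun x _ hx => by simp [hx]]
  simp

theorem exists_mem_inner_pos_of_eq_sum {s : Finset V} {α : V} (hα : α ≠ 0) {c : V → ℕ}
    (hc : α = ∑ γ ∈ s, (c γ : ℝ) • γ) : ∃ δ ∈ s, c δ ≠ 0 ∧ 0 < ⟪α, δ⟫_ℝ := by
  have : ∑ δ ∈ s, (0 : ℝ) < ∑ δ ∈ s, (c δ : ℝ) * ⟪α, δ⟫_ℝ := by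
    simpa [← real_inner_smul_right, ← inner_sum, ← hc] using real_inner_self_pos.mpr hα
  obtain ⟨δ, hδ, hpos⟩ := Finset.exists_lt_of_sum_lt this
  exact ⟨δ, hδ, fun h => by simp [h] at hpos, pos_of_mul_pos_right hpos (Nat.cast_nonneg _)⟩

theorem Finset.sum_update_pred_smul {M : Type*} [AddCommGroup M] [Module ℝ M] [DecidableEq M]
    {s : Finset M} {c : M → ℕ} {i : M} (hi : i ∈ s) (hc : c i ≠ 0) :
    ∑ x ∈ s, (Function.update c i (c i - 1) x : ℝ) • x = ∑ x ∈ s, (c x : ℝ) • x - i := by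
  have hrest : ∀ x ∈ s \ {i}, (Function.update c i (c i - 1) x : ℝ) • x = (c x : ℝ) • x :=
    fun x hx => by rw [Function.update_of_ne (by simpa using (Finset.mem_sdiff.mp hx).2)]
  rw [Finset.sum_eq_add_sum_sdiff_singleton_of_mem hi, Finset.sum_congr rfl hrest,
    Finset.sum_eq_add_sum_sdiff_singleton_of_mem hi (fun x => (c x : ℝ) • x), Function.update_self,
    Nat.cast_pred (Nat.pos_of_ne_zero hc), sub_smul, one_smul]
  abel

theorem Finset.sum_update_pred_lt {ι : Type*} [DecidableEq ι] {s : Finset ι} {c : ι → ℕ} {i : ι}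
    (hi : i ∈ s) (hc : c i ≠ 0) : ∑ x ∈ s, Function.update c i (c i - 1) x < ∑ x ∈ s, c x := by
  rw [Finset.sum_update_of_mem hi, Finset.sum_eq_add_sum_sdiff_singleton_of_mem hi]
  omega

section Lie

variable {k L : Type*} [Field k] [LieRing L] [LieAlgebra k L]

/-- `[m, L]`, the paper's `V_m`. -/
def Submodule.bracketSpan (m : Submodule k L) : Submodule k L :=
  Submodule.span k {z | ∃ x ∈ m, ∃ y : L, z = ⁅x, y⁆}

namespace Submodule

variable {m : Submodule k L}

theorem lie_mem_bracketSpan {x : L} (hx : x ∈ m) (y : L) : ⁅x, y⁆ ∈ m.bracketSpan :=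
  subset_span ⟨x, hx, y, rfl⟩

theorem lie_mem_bracketSpan' {x : L} (hx : x ∈ m) (y : L) : ⁅y, x⁆ ∈ m.bracketSpan := by
  rw [← lie_skew]
  exact neg_mem (lie_mem_bracketSpan hx y)

theorem lie_mem_bracketSpan_of_forall_lie_mem {x : L} (hxm : ∀ y ∈ m, ⁅x, y⁆ ∈ m) {v : L}
    (hv : v ∈ m.bracketSpan) : ⁅x, v⁆ ∈ m.bracketSpan := by
  induction hv using Submodule.span_induction with
  | mem _ h =>
    obtain ⟨y, hy, z, rfl⟩ := h
    rw [leibniz_lie]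
    exact add_mem (lie_mem_bracketSpan (hxm y hy) z) (lie_mem_bracketSpan hy _)
  | zero => simp
  | add _ _ _ _ hu hw => rw [lie_add]; exact add_mem hu hw
  | smul t _ _ hu => rw [lie_smul]; exact smul_mem _ t hu

end Submodule

namespace RootDecomp

variable {Δ : Set V} (D : RootDecomp k L Δ)

omit [InnerProductSpace ℝ V] in
theorem gs_le_of_lie_mem {ρ σ τ : V} (hρ : ρ ∈ Δ) (hσ : σ ∈ Δ) (hτ : τ ∈ Δ) (hsum : ρ + σ = τ)
    {S : Submodule k L} (hS : ∀ x ∈ D.gs ρ, ∀ y ∈ D.gs σ, ⁅x, y⁆ ∈ S) : D.gs τ ≤ S := by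
  subst hsum
  intro z hz
  obtain ⟨x, hx, y, hy, rfl⟩ := D.lie_span ρ hρ σ hσ hτ z hz
  exact hS x hx y hy

omit [InnerProductSpace ℝ V] in
theorem gs_le_bracketSpan {β : V} (hβ : β ∈ Δ) {m : Submodule k L} (hm : D.gs β ≤ m) :
    D.gs β ≤ m.bracketSpan := by
  intro z hz
  obtain ⟨h, -, x, hx, rfl⟩ := D.exists_lie_H β hβ z hz
  exact Submodule.lie_mem_bracketSpan' (hm hx) h

theorem lie_mem_iSup_of_isPos (hΔ : IsRootSystem Δ) {Pi : Finset V} (hB : IsBase Δ Pi)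
    {R₁ : Set V} (hR₁pos : R₁ ⊆ {β | IsPos Δ Pi β})
    (hup : ∀ ω ∈ R₁, ∀ γ : V, IsPos Δ Pi γ → ω + γ ∈ Δ → ω + γ ∈ R₁)
    {ρ : V} (hρ : IsPos Δ Pi ρ) {x y : L} (hx : x ∈ D.gs ρ) (hy : y ∈ ⨆ β ∈ R₁, D.gs β) :
    ⁅x, y⁆ ∈ ⨆ β ∈ R₁, D.gs β := by
  suffices (⨆ β ∈ R₁, D.gs β) ≤ (⨆ β ∈ R₁, D.gs β).comap (LieAlgebra.ad k L x : L →ₗ[k] L) from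
    this hy
  refine iSup₂_le fun β hβ y hy => ?_
  have hxy : ⁅x, y⁆ ∈ D.gs (β + ρ) := add_comm ρ β ▸ D.lie_mem ρ β x hx y hy
  simp only [Submodule.mem_comap, LieAlgebra.ad_apply]
  by_cases hβρ : β + ρ ∈ Δ
  · exact le_iSup₂ (f := fun β _ => D.gs β) (β + ρ) (hup β hβ ρ hρ hβρ) hxy
  obtain ⟨hβΔ, cβ, hcβ⟩ := hR₁pos hβ
  obtain ⟨-, cρ, hcρ⟩ := hρ
  have hne : β + ρ ≠ 0 := fun h => hΔ.ne_zero hβΔ (hB.eq_zero_of_add_eq_zero hcβ hcρ h)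
  rw [D.gs_eq_bot _ hβρ hne, Submodule.mem_bot] at hxy
  exact hxy ▸ zero_mem _

theorem gs_le_of_coeff_ne_zero (hΔ : IsRootSystem Δ) {Pi : Finset V} (hB : IsBase Δ Pi)
    {S : Submodule k L} (hS : ∀ ρ, IsPos Δ Pi ρ → ∀ x ∈ D.gs ρ, ∀ s ∈ S, ⁅x, s⁆ ∈ S)
    {γ : V} (hγ : γ ∈ Pi) (hγS : D.gs γ ≤ S) {a : V} (ha : a ∈ Δ) {c : V → ℕ}
    (hc : a = ∑ x ∈ Pi, (c x : ℝ) • x) (hcγ : c γ ≠ 0) : D.gs a ≤ S := by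
  classical
  induction hn : ∑ x ∈ Pi, c x using Nat.strong_induction_on generalizing a c with
  | _ n ih =>
  by_cases haγ : a = γ
  · exact haγ ▸ hγS
  obtain ⟨δ, hδ, hcδ, hpos⟩ := exists_mem_inner_pos_of_eq_sum (hΔ.ne_zero ha) hc
  set c' := Function.update c δ (c δ - 1)
  have hc' : a - δ = ∑ x ∈ Pi, (c' x : ℝ) • x := by rw [hc, Finset.sum_update_pred_smul hδ hcδ]
  by_cases hc'γ : c' γ = 0
  · -- Subtracting `δ` removed `γ` from the support: `δ = γ`, and `a - γ` is a positive root.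
    obtain rfl : δ = γ := by
      by_contra h
      exact hcγ (by simpa [c', Function.update_of_ne (Ne.symm h)] using hc'γ)
    have haδ := hΔ.sub_mem_of_inner_pos ha (hB.subset hδ) haγ hpos
    exact D.gs_le_of_lie_mem haδ (hB.subset hδ) ha (sub_add_cancel a δ)
      fun x hx y hy => hS _ ⟨haδ, c', hc'⟩ x hx y (hγS hy)
  · have haδ : a ≠ δ := by
      rintro rfl
      have hsum : ∑ x ∈ Pi, (c' x : ℝ) • x = 0 := by rw [← hc', sub_self]
      exact hc'γ (by exact_mod_cast hB.coeff_eq_zero_of_sum_eq_zero hsum hγ)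
    have haδΔ := hΔ.sub_mem_of_inner_pos ha (hB.subset hδ) haδ hpos
    have hδS := ih _ (hn ▸ Finset.sum_update_pred_lt hδ hcδ) haδΔ hc' hc'γ rfl
    exact D.gs_le_of_lie_mem (hB.subset hδ) haδΔ ha (add_sub_cancel δ a)
      fun x hx y hy => hS δ (hB.isPos_of_mem hδ) x hx y (hδS hy)

end RootDecomp

end Lie

theorem rootSpace_subset_bracket_of_support_general {k L : Type*} [Field k] [LieRing L]
    [LieAlgebra k L] (Δ : Set V) (Pi : Finset V)
    (hΔ : IsRootSystem Δ) (hB : IsBase Δ Pi)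
    (D : RootDecomp k L Δ)
    (R₁ : Set V) (hR₁pos : R₁ ⊆ {β | IsPos Δ Pi β})
    (hup : ∀ ω ∈ R₁, ∀ γ : V, IsPos Δ Pi γ → ω + γ ∈ Δ → ω + γ ∈ R₁)
    (m Vm W : Submodule k L)
    (hm : m = ⨆ β ∈ R₁, D.gs β)
    (hVm : Vm = Submodule.span k {z | ∃ x ∈ m, ∃ y : L, z = ⁅x, y⁆})
    (α : V) (hα : IsPos Δ Pi α)
    (c : V → ℕ) (hc : α = ∑ γ ∈ Pi, (c γ : ℝ) • γ)
    (hmeet : ∃ β ∈ R₁, ∃ γ ∈ Pi, c γ ≠ 0 ∧ (β = γ ∨ β - γ ∈ Δ)) :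
    D.gs α ≤ Vm ⊔ W := by
  obtain ⟨β, hβ, γ, hγ, hcγ, hβγ⟩ := hmeet
  change Vm = m.bracketSpan at hVm
  subst hVm
  have hβΔ : β ∈ Δ := (hR₁pos hβ).1
  have hβm : D.gs β ≤ m := hm ▸ le_iSup₂ (f := fun β _ => D.gs β) β hβ
  have hγVm : D.gs γ ≤ m.bracketSpan := by
    rcases hβγ with rfl | hβγ
    · exact D.gs_le_bracketSpan hβΔ hβm
    · have hγβ : γ - β ∈ Δ := neg_sub β γ ▸ hΔ.neg_mem hβγ
      exact D.gs_le_of_lie_mem hβΔ hγβ (hB.subset hγ) (add_sub_cancel β γ)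
        fun x hx y _ => Submodule.lie_mem_bracketSpan (hβm hx) y
  have hstable : ∀ ρ, IsPos Δ Pi ρ → ∀ x ∈ D.gs ρ, ∀ v ∈ m.bracketSpan,
      ⁅x, v⁆ ∈ m.bracketSpan := fun ρ hρ x hx _ =>
    Submodule.lie_mem_bracketSpan_of_forall_lie_mem fun y hy => by
      subst hm
      exact D.lie_mem_iSup_of_isPos hΔ hB hR₁pos hup hρ hx hy
  exact (D.gs_le_of_coeff_ne_zero hΔ hB hstable hγ hγVm hα.1 hc hcγ).trans le_sup_left

/-- If `α` is a positive root whose support meets `S^β` for some `β ∈ R₁` (an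
upward-closed set of positive roots), `m = ⊕_{β∈R₁} g_β`, and `b` is a Borel subalgebra
containing `m`, then `g_α ⊆ [m, g] + [[m, g], b]`. -/
theorem rootSpace_subset_bracket_of_support {k L : Type*} [Field k] [LieRing L]
    [LieAlgebra k L] (Δ : Set V) (Pi : Finset V)
    (hΔ : IsRootSystem Δ) (hB : IsBase Δ Pi)
    (D : RootDecomp k L Δ)
    (R₁ : Set V) (hR₁pos : R₁ ⊆ {β | IsPos Δ Pi β})
    (hup : ∀ ω ∈ R₁, ∀ γ : V, IsPos Δ Pi γ → ω + γ ∈ Δ → ω + γ ∈ R₁)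
    (m b Vm W : Submodule k L)
    (hm : m = ⨆ β ∈ R₁, D.gs β)
    (hb : b = D.H ⊔ ⨆ δ ∈ {δ | IsPos Δ Pi δ}, D.gs δ)
    (hVm : Vm = Submodule.span k {z | ∃ x ∈ m, ∃ y : L, z = ⁅x, y⁆})
    (hW : W = Submodule.span k {z | ∃ v ∈ Vm, ∃ x ∈ b, z = ⁅v, x⁆})
    (α : V) (hα : IsPos Δ Pi α)
    (c : V → ℕ) (hc : α = ∑ γ ∈ Pi, (c γ : ℝ) • γ)
    (hmeet : ∃ β ∈ R₁, ∃ γ ∈ Pi, c γ ≠ 0 ∧ (β = γ ∨ β - γ ∈ Δ)) :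
    D.gs α ≤ Vm ⊔ W :=
  rootSpace_subset_bracket_of_support_general Δ Pi hΔ hB D R₁ hR₁pos hup m Vm W hm hVm α hα c hc
    hmeet
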